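/- arXiv:2209.09896 — 2 statements merged into one kernel-verified Lean document; each statement's English description precedes it below -/
import Mathlib

section
/- For all integers ρ ≥ ℓ ≥ 1 and every real ε > 0, there exists a matroid M = (E, I) on a finite ground set with rank ρ and girth ℓ + 1 whose rank function r has correlation gap CG(r) ≤ 1 − 1/e + ℓ/(e·ρ) + ε. -/
open scoped BigOperators Classical

/-- Multilinear extension of a set function: `F(x) = Σ_{S⊆E} f(S) Π_{i∈S} x_i Π_{i∉S} (1−x_i)`. -/
noncomputable def multilinearExt {E : Type*} [Fintype E] (f : Finset E → ℝ) (x : E → ℝ) : ℝ :=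
  ∑ S : Finset E, f S * ((∏ i ∈ S, x i) * ∏ i ∈ Sᶜ, (1 - x i))

/-- Concave extension of a set function: the maximum of `Σ_S λ_S f(S)` over probability
distributions `λ` on subsets with marginals `x`. -/
noncomputable def concaveExt {E : Type*} [Fintype E] (f : Finset E → ℝ) (x : E → ℝ) : ℝ :=
  sSup { v : ℝ | ∃ lam : Finset E → ℝ,
    (∀ S, 0 ≤ lam S) ∧ (∑ S : Finset E, lam S) = 1 ∧
    (∀ i : E, (∑ S ∈ Finset.univ.filter (fun S : Finset E => i ∈ S), lam S) = x i) ∧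
    v = ∑ S : Finset E, lam S * f S }

/-- The ratio `F(x)/f̂(x)` with the convention that it equals `1` when `f̂(x) = 0`. -/
noncomputable def cgRatio {E : Type*} [Fintype E] (f : Finset E → ℝ) (x : E → ℝ) : ℝ :=
  if concaveExt f x = 0 then 1 else multilinearExt f x / concaveExt f x

/-- The correlation gap `CG(f) = inf_{x ∈ [0,1]^E} F(x)/f̂(x)`. -/
noncomputable def corrGap {E : Type*} [Fintype E] (f : Finset E → ℝ) : ℝ :=
  sInf { v : ℝ | ∃ x : E → ℝ, (∀ i, 0 ≤ x i ∧ x i ≤ 1) ∧ v = cgRatio f x }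

/-- A matroid on a finite ground set `E`, given by its independent sets. -/
structure FinMatroid (E : Type*) where
  Indep : Finset E → Prop
  indep_empty : Indep ∅
  indep_subset : ∀ ⦃S T : Finset E⦄, Indep T → S ⊆ T → Indep S
  indep_aug : ∀ ⦃S T : Finset E⦄, Indep S → Indep T → S.card < T.card →
    ∃ i ∈ T, i ∉ S ∧ Indep (insert i S)

/-- Rank function of a matroid: `r(S) = max{|T| : T ⊆ S, T independent}`. -/
noncomputable def FinMatroid.rank {E : Type*} (M : FinMatroid E) (S : Finset E) : ℕ :=
  (S.powerset.filter (fun T => M.Indep T)).sup Finset.card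

/-- Weighted rank function: `r_w(S) = max{ Σ_{i∈T} w_i : T ⊆ S, T independent }`. -/
noncomputable def FinMatroid.wRank {E : Type*} (M : FinMatroid E) (w : E → ℝ)
    (S : Finset E) : ℝ :=
  sSup { v : ℝ | ∃ T : Finset E, T ⊆ S ∧ M.Indep T ∧ v = ∑ i ∈ T, w i }

/-- Girth of a matroid: the smallest size of a dependent set. -/
noncomputable def FinMatroid.girth {E : Type*} (M : FinMatroid E) : ℕ :=
  sInf { n : ℕ | ∃ S : Finset E, ¬ M.Indep S ∧ S.card = n }

/-!
Take `m = ρ - ℓ` blocks of `n` elements and one more block `K` of `ℓ + 1` elements, and call a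
set independent when its size is at most `ℓ - 1` plus the number of blocks it meets. This matroid
has rank `ρ` and girth `ℓ + 1`. Let `x` be `1/n` on the `m` blocks and `ℓ/(ℓ+1)` on `K`. The
uniform mixture of the bases formed by one column of the `m` blocks and all but one element of
`K` has marginals `x`, so `f̂(x) ≥ ρ`. The rank of a set is at most `ℓ - 1` plus the number of
blocks it meets, and a random set containing each `i` independently with probability `x i` meets
each of the `m` blocks with probability `1 - (1 - 1/n)^n → 1 - 1/e`, so
`F(x) ≤ ℓ + (ρ - ℓ)(1 - (1 - 1/n)^n)`.
-/

namespace FinMatroid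

variable {E : Type*} (M : FinMatroid E)

theorem card_le_rank {S T : Finset E} (hTS : T ⊆ S) (hT : M.Indep T) : T.card ≤ M.rank S :=
  Finset.le_sup (Finset.mem_filter.mpr ⟨Finset.mem_powerset.mpr hTS, hT⟩)

theorem rank_le_of_forall {S : Finset E} {k : ℕ} (h : ∀ T ⊆ S, M.Indep T → T.card ≤ k) :
    M.rank S ≤ k :=
  Finset.sup_le fun T hT => by
    rw [Finset.mem_filter, Finset.mem_powerset] at hT
    exact h T hT.1 hT.2

theorem girth_eq {k : ℕ} (hindep : ∀ S : Finset E, S.card < k → M.Indep S) {S : Finset E}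
    (hS : ¬ M.Indep S) (hcard : S.card = k) : M.girth = k := by
  refine le_antisymm (Nat.sInf_le ⟨S, hS, hcard⟩) (le_csInf ⟨k, S, hS, hcard⟩ ?_)
  rintro _ ⟨T, hT, rfl⟩
  exact not_lt.mp fun hlt => hT (hindep T hlt)

variable {β : Type*} [DecidableEq β]

theorem card_image_le_card_image_add_card_sdiff (blk : E → β) {S T : Finset E} (h : S ⊆ T) :
    (T.image blk).card ≤ (S.image blk).card + (T \ S).card := by
  calc (T.image blk).card = (S.image blk ∪ (T \ S).image blk).card := by
        rw [← Finset.image_union, Finset.union_sdiff_of_subset h]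
    _ ≤ (S.image blk).card + ((T \ S).image blk).card := Finset.card_union_le _ _
    _ ≤ (S.image blk).card + (T \ S).card := Nat.add_le_add_left Finset.card_image_le _

/-- The union of the partition matroid of the fibres of `blk` with the free matroid of rank `c`. -/
def partitionUnion (blk : E → β) (c : ℕ) : FinMatroid E where
  Indep S := S.card ≤ c + (S.image blk).card
  indep_empty := by simp
  indep_subset S T hT hST := by
    have := card_image_le_card_image_add_card_sdiff blk hST
    have := Finset.card_sdiff_add_card_eq_card hST
    omega
  indep_aug S T hS hT hST := by
    by_cases hslack : S.card < c + (S.image blk).card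
    · obtain ⟨i, hiT, hiS⟩ := Finset.not_subset.mp fun h => (Finset.card_le_card h).not_gt hST
      refine ⟨i, hiT, hiS, ?_⟩
      have := Finset.card_le_card (Finset.image_subset_image (f := blk) (Finset.subset_insert i S))
      rw [Finset.card_insert_of_notMem hiS]
      omega
    · have himg : (S.image blk).card < (T.image blk).card := by omega
      obtain ⟨b, hbT, hbS⟩ := Finset.exists_mem_notMem_of_card_lt_card himg
      obtain ⟨i, hiT, rfl⟩ := Finset.mem_image.mp hbT
      have hiS : i ∉ S := fun hi => hbS (Finset.mem_image_of_mem blk hi)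
      refine ⟨i, hiT, hiS, ?_⟩
      rw [Finset.card_insert_of_notMem hiS, Finset.image_insert, Finset.card_insert_of_notMem hbS]
      omega

variable (blk : E → β) (c : ℕ)

theorem partitionUnion_indep_iff {S : Finset E} :
    (partitionUnion blk c).Indep S ↔ S.card ≤ c + (S.image blk).card := Iff.rfl

theorem rank_partitionUnion_le (S : Finset E) :
    (partitionUnion blk c).rank S ≤ c + (S.image blk).card :=
  rank_le_of_forall _ fun _ hTS hT =>
    hT.trans (Nat.add_le_add_left (Finset.card_le_card (Finset.image_subset_image hTS)) c)

theorem girth_partitionUnion {S : Finset E} (hS : (S.image blk).card ≤ 1) (hcard : S.card = c + 2) :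
    (partitionUnion blk c).girth = c + 2 := by
  refine girth_eq _ (fun T hT => ?_) (S := S) (by rw [partitionUnion_indep_iff]; omega) hcard
  rcases T.eq_empty_or_nonempty with rfl | hne
  · exact (partitionUnion blk c).indep_empty
  · have := (hne.image blk).card_pos
    rw [partitionUnion_indep_iff]
    omega

end FinMatroid

section MultilinearExt

open Finset

variable {E : Type*} [Fintype E]

theorem sum_prod_mul_prod_compl (u v : E → ℝ) :
    ∑ S : Finset E, (∏ i ∈ S, u i) * ∏ i ∈ Sᶜ, v i = ∏ i, (u i + v i) := by
  rw [prod_add u v univ, powerset_univ]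
  simp only [compl_eq_univ_sdiff]

theorem multilinearExt_const (a : ℝ) (x : E → ℝ) : multilinearExt (fun _ => a) x = a := by
  rw [multilinearExt, ← mul_sum, sum_prod_mul_prod_compl]
  simp

theorem multilinearExt_add (f g : Finset E → ℝ) (x : E → ℝ) :
    multilinearExt (fun S => f S + g S) x = multilinearExt f x + multilinearExt g x := by
  simp only [multilinearExt, add_mul, sum_add_distrib]

theorem multilinearExt_sub (f g : Finset E → ℝ) (x : E → ℝ) :
    multilinearExt (fun S => f S - g S) x = multilinearExt f x - multilinearExt g x := by
  simp only [multilinearExt, sub_mul, sum_sub_distrib]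

theorem multilinearExt_sum {ι : Type*} (s : Finset ι) (f : ι → Finset E → ℝ) (x : E → ℝ) :
    multilinearExt (fun S => ∑ j ∈ s, f j S) x = ∑ j ∈ s, multilinearExt (f j) x := by
  simp only [multilinearExt, sum_mul]
  exact sum_comm

theorem multilinearExt_mono {f g : Finset E → ℝ} (hfg : ∀ S, f S ≤ g S) {x : E → ℝ}
    (hx : ∀ i, 0 ≤ x i ∧ x i ≤ 1) : multilinearExt f x ≤ multilinearExt g x :=
  sum_le_sum fun S _ => mul_le_mul_of_nonneg_right (hfg S) <|
    mul_nonneg (prod_nonneg fun i _ => (hx i).1) (prod_nonneg fun i _ => sub_nonneg.mpr (hx i).2)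

theorem multilinearExt_disjoint (T : Finset E) (x : E → ℝ) :
    multilinearExt (fun S => if Disjoint S T then 1 else 0) x = ∏ i ∈ T, (1 - x i) := by
  have hmiss : ∀ S : Finset E, (if Disjoint S T then (1 : ℝ) else 0) * ∏ i ∈ S, x i
      = ∏ i ∈ S, if i ∈ T then 0 else x i := by
    intro S
    split_ifs with h
    · rw [one_mul]
      exact prod_congr rfl fun i hi => (if_neg (disjoint_left.mp h hi)).symm
    · obtain ⟨i, hiS, hiT⟩ := not_disjoint_iff.mp h
      rw [zero_mul]
      exact (prod_eq_zero hiS (by simp [hiT])).symm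
  simp only [multilinearExt, ← mul_assoc, hmiss, sum_prod_mul_prod_compl]
  conv_rhs => rw [← univ_inter T, ← prod_ite_mem]
  exact prod_congr rfl fun i _ => by split_ifs <;> ring

theorem card_image_eq_sum_not_disjoint {β : Type*} [Fintype β] [DecidableEq β] (blk : E → β)
    (S : Finset E) :
    ((S.image blk).card : ℝ)
      = ∑ b, (1 - if Disjoint S ({i | blk i = b} : Finset E) then 1 else 0) := by
  have hmem : ∀ b, (1 - if Disjoint S ({i | blk i = b} : Finset E) then (1 : ℝ) else 0)
      = if b ∈ S.image blk then 1 else 0 := by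
    intro b
    simp only [mem_image, disjoint_left, mem_filter, mem_univ, true_and]
    split_ifs <;> grind
  rw [sum_congr rfl fun b _ => hmem b, sum_boole, filter_mem_eq_inter, univ_inter]

theorem multilinearExt_card_image {β : Type*} [Fintype β] [DecidableEq β] (blk : E → β)
    (x : E → ℝ) :
    multilinearExt (fun S => ((S.image blk).card : ℝ)) x
      = ∑ b, (1 - ∏ i with blk i = b, (1 - x i)) := by
  simp only [card_image_eq_sum_not_disjoint, multilinearExt_sum, multilinearExt_sub,
    multilinearExt_const, multilinearExt_disjoint]

end MultilinearExt

section ConcaveExt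

open Finset

variable {E : Type*} [Fintype E] {f : Finset E → ℝ} {x : E → ℝ}

theorem le_concaveExt {lam : Finset E → ℝ} (hlam : ∀ S, 0 ≤ lam S) (hsum : ∑ S, lam S = 1)
    (hmarg : ∀ i, ∑ S with i ∈ S, lam S = x i) : ∑ S, lam S * f S ≤ concaveExt f x := by
  refine le_csSup ⟨∑ T, |f T|, ?_⟩ ⟨lam, hlam, hsum, hmarg, rfl⟩
  rintro _ ⟨mu, hmu, hmusum, -, rfl⟩
  calc ∑ S, mu S * f S ≤ ∑ S, mu S * ∑ T, |f T| := sum_le_sum fun S _ =>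
        mul_le_mul_of_nonneg_left ((le_abs_self _).trans
          (single_le_sum (fun T _ => abs_nonneg (f T)) (mem_univ S))) (hmu S)
    _ = ∑ T, |f T| := by rw [← sum_mul, hmusum, one_mul]

theorem sum_mul_le_concaveExt {A : Type*} [Fintype A] {w : A → ℝ} {B : A → Finset E}
    (hw : ∀ a, 0 ≤ w a) (hsum : ∑ a, w a = 1) (hmarg : ∀ i, ∑ a with i ∈ B a, w a = x i) :
    ∑ a, w a * f (B a) ≤ concaveExt f x := by
  have hfib : ∀ g : A → ℝ, ∑ S, ∑ a with B a = S, g a = ∑ a, g a := fun g => sum_fiberwise _ B g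
  convert le_concaveExt (f := f) (lam := fun S => ∑ a with B a = S, w a)
    (fun S => sum_nonneg fun a _ => hw a) (by rw [hfib, hsum]) (fun i => ?_) using 1
  · rw [← hfib]
    refine sum_congr rfl fun S _ => ?_
    rw [sum_mul]
    exact sum_congr rfl fun a ha => by rw [(mem_filter.mp ha).2]
  · rw [← hmarg i, sum_filter, sum_filter, ← hfib]
    refine sum_congr rfl fun S _ => ?_
    have hB : ∀ a ∈ ({a | B a = S} : Finset A), i ∈ B a ↔ i ∈ S := fun a ha => by
      rw [(mem_filter.mp ha).2]
    split_ifs with h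
    · exact sum_congr rfl fun a ha => (if_pos ((hB a ha).mpr h)).symm
    · exact (sum_eq_zero fun a ha => if_neg (mt (hB a ha).mp h)).symm

theorem concaveExt_nonneg (hf : ∀ S, 0 ≤ f S) : 0 ≤ concaveExt f x :=
  Real.sSup_nonneg <| by
    rintro _ ⟨lam, hlam, -, -, rfl⟩
    exact sum_nonneg fun S _ => mul_nonneg (hlam S) (hf S)

end ConcaveExt

theorem corrGap_le_div {E : Type*} [Fintype E] {f : Finset E → ℝ} (hf : ∀ S, 0 ≤ f S)
    {x : E → ℝ} (hx : ∀ i, 0 ≤ x i ∧ x i ≤ 1) {c : ℝ} (hc : 0 < c) (hcx : c ≤ concaveExt f x) :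
    corrGap f ≤ multilinearExt f x / c := by
  have hF : ∀ y : E → ℝ, (∀ i, 0 ≤ y i ∧ y i ≤ 1) → 0 ≤ multilinearExt f y := fun y hy => by
    simpa [multilinearExt_const] using multilinearExt_mono hf hy
  have hbdd : BddBelow {v | ∃ y : E → ℝ, (∀ i, 0 ≤ y i ∧ y i ≤ 1) ∧ v = cgRatio f y} := by
    refine ⟨0, ?_⟩
    rintro _ ⟨y, hy, rfl⟩
    unfold cgRatio
    split_ifs
    · exact zero_le_one
    · exact div_nonneg (hF y hy) (concaveExt_nonneg hf)
  calc corrGap f ≤ cgRatio f x := csInf_le hbdd ⟨x, hx, rfl⟩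
    _ = multilinearExt f x / concaveExt f x := if_neg (hc.trans_le hcx).ne'
    _ ≤ multilinearExt f x / c := div_le_div_of_nonneg_left (hF x hx) hc hcx

theorem exists_one_sub_inv_pow_gt {ε : ℝ} (hε : 0 < ε) :
    ∃ n : ℕ, 0 < n ∧ Real.exp (-1) - ε < (1 - (n : ℝ)⁻¹) ^ n := by
  have hlim := (Real.tendsto_one_add_div_pow_exp (-1)).eventually
    (eventually_gt_nhds (sub_lt_self (Real.exp (-1)) hε))
  obtain ⟨n, hn, hpos⟩ := (hlim.and (Filter.eventually_gt_atTop 0)).exists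
  exact ⟨n, hpos, by simpa [neg_div, ← sub_eq_add_neg, one_div] using hn⟩

theorem add_mul_one_sub_div_le {a b q ε : ℝ} (ha : 0 < a) (hb : 0 ≤ b) (hε : 0 < ε)
    (hq : Real.exp (-1) - ε < q) :
    (a + b * (1 - q)) / (b + a) ≤ 1 - 1 / Real.exp 1 + a / (Real.exp 1 * (b + a)) + ε := by
  set t := b / (b + a)
  have ht0 : 0 ≤ t := by positivity
  have ht1 : t ≤ 1 := div_le_one_of_le₀ (by linarith) (by positivity)
  have hlhs : (a + b * (1 - q)) / (b + a) = 1 - t * q := by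
    simp only [t]
    field_simp
    ring
  have hrhs : a / (Real.exp 1 * (b + a)) = (1 - t) / Real.exp 1 := by
    simp only [t]
    field_simp
    ring
  rw [Real.exp_neg] at hq
  rw [hlhs, hrhs, one_div, div_eq_mul_inv]
  nlinarith [mul_le_mul_of_nonneg_left hq.le ht0, mul_le_mul_of_nonneg_right ht1 hε.le]

namespace CorrGapWitness

open Finset

variable (m n c : ℕ)

abbrev Ground : Type := (Fin m × Fin n) ⊕ Fin (c + 2)

def blockOf : Ground m n c → Option (Fin m) := Sum.elim (fun p => some p.1) fun _ => none

noncomputable def matroid : FinMatroid (Ground m n c) :=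
  FinMatroid.partitionUnion (blockOf m n c) c

def base (t : Fin n) (k : Fin (c + 2)) : Finset (Ground m n c) := (univ ×ˢ {t}).disjSum {k}ᶜ

noncomputable def point : Ground m n c → ℝ :=
  Sum.elim (fun _ => (n : ℝ)⁻¹) fun _ => ((c : ℝ) + 1) / ((c : ℝ) + 2)

variable {m n c}

theorem card_base (t : Fin n) (k : Fin (c + 2)) : (base m n c t k).card = m + (c + 1) := by
  simp [base, card_compl]

theorem image_blockOf_base (t : Fin n) (k : Fin (c + 2)) :
    (base m n c t k).image (blockOf m n c) = univ := by
  refine eq_univ_of_forall fun b => mem_image.mpr ?_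
  cases b with
  | none =>
    obtain ⟨k', hk'⟩ := exists_ne k
    exact ⟨Sum.inr k', by simp [base, hk'], rfl⟩
  | some j => exact ⟨Sum.inl (j, t), by simp [base], rfl⟩

theorem matroid_indep_base (t : Fin n) (k : Fin (c + 2)) :
    (matroid m n c).Indep (base m n c t k) := by
  rw [matroid, FinMatroid.partitionUnion_indep_iff, card_base, image_blockOf_base, card_univ,
    Fintype.card_option, Fintype.card_fin]
  omega

theorem matroid_rank_univ [NeZero n] : (matroid m n c).rank univ = m + (c + 1) := by
  refine le_antisymm ?_ ?_
  · refine (FinMatroid.rank_partitionUnion_le _ _ _).trans ?_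
    have := card_le_univ ((univ : Finset (Ground m n c)).image (blockOf m n c))
    simp only [Fintype.card_option, Fintype.card_fin] at this
    omega
  · simpa [card_base] using (matroid m n c).card_le_rank (subset_univ _) (matroid_indep_base 0 0)

theorem matroid_girth : (matroid m n c).girth = c + 2 := by
  refine FinMatroid.girth_partitionUnion _ _ (S := (∅ : Finset (Fin m × Fin n)).disjSum univ) ?_ ?_
  · refine card_le_one.mpr ?_
    simp [blockOf]
  · simp

theorem sum_filter_mem_base [NeZero n] (i : Ground m n c) :
    ∑ a : Fin n × Fin (c + 2) with i ∈ base m n c a.1 a.2, ((n : ℝ) * ((c : ℝ) + 2))⁻¹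
      = point m n c i := by
  have hn : (n : ℝ) ≠ 0 := Nat.cast_ne_zero.mpr (NeZero.ne n)
  rw [sum_const, nsmul_eq_mul]
  cases i with
  | inl p =>
    have hfilter : ({a | Sum.inl p ∈ base m n c a.1 a.2} : Finset (Fin n × Fin (c + 2)))
        = {p.2} ×ˢ univ := by
      ext ⟨t, k⟩
      obtain ⟨j, b⟩ := p
      simp [base, eq_comm]
    rw [hfilter, card_product, card_singleton, card_univ, Fintype.card_fin, point, Sum.elim_inl]
    push_cast
    field_simp
  | inr k' =>
    have hfilter : ({a | Sum.inr k' ∈ base m n c a.1 a.2} : Finset (Fin n × Fin (c + 2)))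
        = univ ×ˢ {k'}ᶜ := by
      ext ⟨t, k⟩
      simp [base, eq_comm]
    rw [hfilter, card_product, card_compl, card_singleton, card_univ, Fintype.card_fin,
      Fintype.card_fin, point, Sum.elim_inr]
    push_cast
    field_simp

theorem le_concaveExt_point [NeZero n] :
    (m : ℝ) + (c + 1) ≤ concaveExt (fun S => ((matroid m n c).rank S : ℝ)) (point m n c) := by
  set w : ℝ := ((n : ℝ) * ((c : ℝ) + 2))⁻¹
  have hw : 0 ≤ w := by positivity
  have hsum : ∑ _a : Fin n × Fin (c + 2), w = 1 := by
    have hn : (n : ℝ) ≠ 0 := Nat.cast_ne_zero.mpr (NeZero.ne n)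
    simp only [sum_const, card_univ, Fintype.card_prod, Fintype.card_fin, nsmul_eq_mul, w]
    push_cast
    field_simp
  calc (m : ℝ) + (c + 1) = ∑ _a : Fin n × Fin (c + 2), w * ((m : ℝ) + (c + 1)) := by
        rw [← sum_mul, hsum, one_mul]
    _ ≤ ∑ a : Fin n × Fin (c + 2), w * ((matroid m n c).rank (base m n c a.1 a.2) : ℝ) := by
        refine sum_le_sum fun a _ => mul_le_mul_of_nonneg_left ?_ hw
        have := (matroid m n c).card_le_rank subset_rfl (matroid_indep_base a.1 a.2)
        rw [card_base] at this
        exact_mod_cast this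
    _ ≤ _ := sum_mul_le_concaveExt (f := fun S => ((matroid m n c).rank S : ℝ))
        (B := fun a : Fin n × Fin (c + 2) => base m n c a.1 a.2) (x := point m n c)
        (fun _ => hw) hsum fun i => by rw [filter_congr_decidable]; exact sum_filter_mem_base i

theorem point_nonneg_and_le_one [NeZero n] (i : Ground m n c) :
    0 ≤ point m n c i ∧ point m n c i ≤ 1 := by
  cases i with
  | inl p =>
    refine ⟨by simp [point], ?_⟩
    rw [point, Sum.elim_inl]
    exact inv_le_one_of_one_le₀ (Nat.one_le_cast.mpr NeZero.one_le)
  | inr k =>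
    refine ⟨by simp only [point, Sum.elim_inr]; positivity, ?_⟩
    rw [point, Sum.elim_inr, div_le_one (by positivity)]
    linarith

theorem prod_blockOf_eq_some (j : Fin m) :
    ∏ i with blockOf m n c i = some j, (1 - point m n c i) = (1 - (n : ℝ)⁻¹) ^ n := by
  rw [prod_filter, Fintype.prod_sum_type, Fintype.prod_prod_type]
  simp [blockOf, point]

theorem multilinearExt_point_le [NeZero n] :
    multilinearExt (fun S => ((matroid m n c).rank S : ℝ)) (point m n c)
      ≤ (c + 1) + m * (1 - (1 - (n : ℝ)⁻¹) ^ n) := by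
  have hnone : 0 ≤ ∏ i with blockOf m n c i = none, (1 - point m n c i) :=
    prod_nonneg fun i _ => sub_nonneg.mpr (point_nonneg_and_le_one i).2
  calc multilinearExt (fun S => ((matroid m n c).rank S : ℝ)) (point m n c)
      ≤ multilinearExt (fun S => c + ((S.image (blockOf m n c)).card : ℝ)) (point m n c) :=
        multilinearExt_mono (fun S => by exact_mod_cast FinMatroid.rank_partitionUnion_le _ _ S)
          point_nonneg_and_le_one
    _ = c + (1 - ∏ i with blockOf m n c i = none, (1 - point m n c i))
          + m * (1 - (1 - (n : ℝ)⁻¹) ^ n) := by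
        rw [multilinearExt_add, multilinearExt_const, multilinearExt_card_image, Fintype.sum_option]
        simp [prod_blockOf_eq_some, add_assoc]
        ring
    _ ≤ (c + 1) + m * (1 - (1 - (n : ℝ)⁻¹) ^ n) := by linarith

theorem corrGap_matroid_le [NeZero n] :
    corrGap (fun S => ((matroid m n c).rank S : ℝ))
      ≤ ((c + 1) + m * (1 - (1 - (n : ℝ)⁻¹) ^ n)) / (m + (c + 1)) := by
  have hρ : (0 : ℝ) < m + (c + 1) := by positivity
  calc corrGap (fun S => ((matroid m n c).rank S : ℝ))
      ≤ multilinearExt (fun S => ((matroid m n c).rank S : ℝ)) (point m n c) / (m + (c + 1)) :=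
        corrGap_le_div (fun _ => Nat.cast_nonneg _) point_nonneg_and_le_one hρ le_concaveExt_point
    _ ≤ _ := div_le_div_of_nonneg_right multilinearExt_point_le hρ.le

end CorrGapWitness

/-- **upper bound.** For all integers `ρ ≥ ℓ ≥ 1` and every `ε > 0`, there is
a matroid with rank `ρ` and girth `ℓ + 1` whose rank function has correlation gap at most
`1 − 1/e + ℓ/(e·ρ) + ε`. -/
theorem exists_matroid_corrGap_le (ρ ℓ : ℕ) (hℓ : 1 ≤ ℓ) (hρ : ℓ ≤ ρ)
    (ε : ℝ) (hε : 0 < ε) :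
    ∃ (E : Type) (inst : Fintype E) (M : FinMatroid E),
      M.rank (@Finset.univ E inst) = ρ ∧
      M.girth = ℓ + 1 ∧
      @corrGap E inst (fun S => (M.rank S : ℝ)) ≤
        1 - 1 / Real.exp 1 + (ℓ : ℝ) / (Real.exp 1 * (ρ : ℝ)) + ε := by
  obtain ⟨c, rfl⟩ := Nat.exists_eq_add_of_le' hℓ
  obtain ⟨m, rfl⟩ := Nat.exists_eq_add_of_le' hρ
  obtain ⟨n, hn, hq⟩ := exists_one_sub_inv_pow_gt hε
  have : NeZero n := ⟨hn.ne'⟩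
  refine ⟨CorrGapWitness.Ground m n c, inferInstance, CorrGapWitness.matroid m n c,
    CorrGapWitness.matroid_rank_univ, CorrGapWitness.matroid_girth,
    CorrGapWitness.corrGap_matroid_le.trans ?_⟩
  push_cast
  exact add_mul_one_sub_div_le (by positivity) (Nat.cast_nonneg m) hε hq
end

section
/- Fix ε ∈ (0, 1/2) and let f: 2^{{1,2}} → ℝ_{≥0} be the monotone (non-submodular) set function with f(∅) = 0, f({1}) = f({2}) = ε, and f({1,2}) = 1. Define φ: [0,1]^2 → ℝ by φ(x) = F(x)/f̂(x) if f̂(x) ≠ 0 and φ(x) = 1 otherwise, where F and f̂ are the multilinear and concave extensions of f. Then inf_{x∈[0,1]^2} φ(x) = 2ε, and this infimum is not attained: φ(x) > 2ε for every x ∈ [0,1]^2. -/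
open scoped BigOperators Classical

/-!
On two elements both extensions are affine in `x` plus the supermodularity gap
`f ∅ + f {0, 1} - f {0} - f {1}` times a coupling term: `x 0 * x 1` for `F` (independent
rounding) and `min (x 0) (x 1)` for `f̂` (the comonotone coupling is optimal). Here the gap is
`1 - 2ε`, and `F - 2ε f̂ = (1 - 2ε) (ε |x 0 - x 1| + x 0 x 1)` is positive except at the
origin, where `f̂ = 0` and the ratio is `1` by convention. On the diagonal `x = (t, t)` the
ratio is `2ε + (1 - 2ε) t`, so the infimum `2ε` is approached as `t → 0` but never reached.
-/

lemma sum_finset_fin_two (g : Finset (Fin 2) → ℝ) :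
    ∑ S : Finset (Fin 2), g S = g ∅ + g {0} + g {1} + g {0, 1} := by
  rw [show (Finset.univ : Finset (Finset (Fin 2))) = {∅, {0}, {1}, {0, 1}} by decide,
    Finset.sum_insert (by decide), Finset.sum_insert (by decide), Finset.sum_pair (by decide)]
  ring

lemma sum_filter_mem_fin_two (i : Fin 2) [DecidablePred fun S : Finset (Fin 2) => i ∈ S]
    (g : Finset (Fin 2) → ℝ) :
    ∑ S ∈ Finset.univ.filter (fun S : Finset (Fin 2) => i ∈ S), g S = g {i} + g {0, 1} := by
  rw [Finset.sum_filter, sum_finset_fin_two]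
  fin_cases i <;> simp

lemma multilinearExt_fin_two (f : Finset (Fin 2) → ℝ) (x : Fin 2 → ℝ) :
    multilinearExt f x = f ∅ * (1 - x 0 - x 1) + f {0} * x 0 + f {1} * x 1 +
      (f ∅ + f {0, 1} - f {0} - f {1}) * (x 0 * x 1) := by
  rw [multilinearExt, sum_finset_fin_two]
  simp only [Finset.compl_eq_univ_sdiff, Finset.sdiff_eq_filter, Finset.prod_filter,
    Fin.prod_univ_two, Finset.prod_empty, Finset.prod_singleton, Finset.prod_insert,
    Finset.mem_insert, Finset.mem_singleton, Finset.notMem_empty, Fin.isValue, one_ne_zero,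
    zero_ne_one, not_false_eq_true, or_true, true_or, ite_not, ↓reduceIte, Finset.filter_true]
  ring

lemma concaveExt_fin_two {f : Finset (Fin 2) → ℝ} (hf : f {0} + f {1} ≤ f ∅ + f {0, 1})
    {x : Fin 2 → ℝ} (hx : ∀ i, 0 ≤ x i ∧ x i ≤ 1) :
    concaveExt f x = f ∅ * (1 - x 0 - x 1) + f {0} * x 0 + f {1} * x 1 +
      (f ∅ + f {0, 1} - f {0} - f {1}) * min (x 0) (x 1) := by
  obtain ⟨⟨ha0, ha1⟩, ⟨hb0, hb1⟩⟩ := And.intro (hx 0) (hx 1)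
  apply IsGreatest.csSup_eq
  constructor
  · -- the comonotone coupling, which puts the largest possible mass `min (x 0) (x 1)` on `{0, 1}`
    let m := min (x 0) (x 1)
    let lam : Finset (Fin 2) → ℝ := fun S =>
      if 0 ∈ S then (if 1 ∈ S then m else x 0 - m)
      else (if 1 ∈ S then x 1 - m else 1 - max (x 0) (x 1))
    have hmax : max (x 0) (x 1) = x 0 + x 1 - m := by linarith [min_add_max (x 0) (x 1)]
    have h0 : lam ∅ = 1 - max (x 0) (x 1) := by simp [lam]
    have h1 : lam {0} = x 0 - m := by simp [lam]
    have h2 : lam {1} = x 1 - m := by simp [lam]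
    have h12 : lam {0, 1} = m := by simp [lam]
    refine ⟨lam, fun S => ?_, ?_, Fin.forall_fin_two.2 ⟨?_, ?_⟩, ?_⟩
    · simp only [lam]
      split_ifs <;> linarith [le_min ha0 hb0, min_le_left (x 0) (x 1), min_le_right (x 0) (x 1),
        max_le ha1 hb1]
    · rw [sum_finset_fin_two, h0, h1, h2, h12]; linarith
    · rw [sum_filter_mem_fin_two, h1, h12]; ring
    · rw [sum_filter_mem_fin_two, h2, h12]; ring
    · rw [sum_finset_fin_two, h0, h1, h2, h12, hmax]; ring
  · rintro v ⟨lam, hlam, hsum, hmarg, rfl⟩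
    have hmarg0 := hmarg 0
    have hmarg1 := hmarg 1
    rw [sum_filter_mem_fin_two] at hmarg0 hmarg1
    rw [sum_finset_fin_two] at hsum ⊢
    have hlam12 : lam {0, 1} ≤ min (x 0) (x 1) :=
      le_min (by linarith [hlam {0}]) (by linarith [hlam {1}])
    calc lam ∅ * f ∅ + lam {0} * f {0} + lam {1} * f {1} + lam {0, 1} * f {0, 1}
        = f ∅ * (1 - x 0 - x 1) + f {0} * x 0 + f {1} * x 1 +
            (f ∅ + f {0, 1} - f {0} - f {1}) * lam {0, 1} := by
          linear_combination f ∅ * hsum + (f {0} - f ∅) * hmarg0 + (f {1} - f ∅) * hmarg1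
      _ ≤ _ := by gcongr; linarith

lemma corrGap_eq_of_forall_lt_cgRatio {E : Type*} [Fintype E] {f : Finset E → ℝ} {c : ℝ}
    (hlt : ∀ x : E → ℝ, (∀ i, 0 ≤ x i ∧ x i ≤ 1) → c < cgRatio f x)
    (happrox : ∀ w, c < w → ∃ x : E → ℝ, (∀ i, 0 ≤ x i ∧ x i ≤ 1) ∧ cgRatio f x < w) :
    corrGap f = c := by
  refine csInf_eq_of_forall_ge_of_forall_gt_exists_lt ?_ ?_ fun w hw => ?_
  · obtain ⟨x, hx, -⟩ := happrox (c + 1) (lt_add_one c)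
    exact ⟨_, x, hx, rfl⟩
  · rintro v ⟨x, hx, rfl⟩
    exact (hlt x hx).le
  · obtain ⟨x, hx, hxw⟩ := happrox w hw
    exact ⟨_, ⟨x, hx, rfl⟩, hxw⟩

lemma two_mul_add_mul_min_lt {ε a b : ℝ} (hε0 : 0 < ε) (hε2 : ε < 1 / 2) (ha : 0 ≤ a)
    (hb : 0 ≤ b) (hab : 0 < a + b) :
    2 * ε * (ε * (a + b) + (1 - 2 * ε) * min a b) < ε * (a + b) + (1 - 2 * ε) * (a * b) := by
  have hmin : 2 * min a b = a + b - |a - b| := by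
    linarith [min_add_max a b, max_sub_min_eq_abs' a b]
  have hpos : 0 < ε * |a - b| + a * b := by
    rcases eq_or_ne a b with rfl | hne
    · nlinarith [abs_nonneg (a - a)]
    · nlinarith [mul_pos hε0 (abs_pos.2 (sub_ne_zero.2 hne)), mul_nonneg ha hb]
  have hgap : ε * (a + b) + (1 - 2 * ε) * (a * b) - 2 * ε * (ε * (a + b) + (1 - 2 * ε) * min a b)
      = (1 - 2 * ε) * (ε * |a - b| + a * b) := by
    linear_combination (-(1 - 2 * ε) * ε) * hmin
  linarith [mul_pos (by linarith : (0 : ℝ) < 1 - 2 * ε) hpos]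

namespace NonSubmodularExample

variable {ε : ℝ} {f : Finset (Fin 2) → ℝ}
  (h0 : f ∅ = 0) (h1 : f {0} = ε) (h2 : f {1} = ε) (h12 : f {0, 1} = 1)
include h0 h1 h2 h12

lemma multilinearExt_eq (x : Fin 2 → ℝ) :
    multilinearExt f x = ε * (x 0 + x 1) + (1 - 2 * ε) * (x 0 * x 1) := by
  rw [multilinearExt_fin_two, h0, h1, h2, h12]; ring

lemma concaveExt_eq (hε2 : ε < 1 / 2) {x : Fin 2 → ℝ} (hx : ∀ i, 0 ≤ x i ∧ x i ≤ 1) :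
    concaveExt f x = ε * (x 0 + x 1) + (1 - 2 * ε) * min (x 0) (x 1) := by
  rw [concaveExt_fin_two (by linarith) hx, h0, h1, h2, h12]; ring

lemma two_mul_lt_cgRatio (hε0 : 0 < ε) (hε2 : ε < 1 / 2) {x : Fin 2 → ℝ}
    (hx : ∀ i, 0 ≤ x i ∧ x i ≤ 1) : 2 * ε < cgRatio f x := by
  obtain ⟨⟨ha0, -⟩, ⟨hb0, -⟩⟩ := And.intro (hx 0) (hx 1)
  rcases (add_nonneg ha0 hb0).eq_or_lt with hab | hab
  · have hD : concaveExt f x = 0 := by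
      rw [concaveExt_eq h0 h1 h2 h12 hε2 hx, (by linarith : x 0 = 0), (by linarith : x 1 = 0)]
      simp
    rw [cgRatio, if_pos hD]; linarith
  · have hD : 0 < concaveExt f x := by
      rw [concaveExt_eq h0 h1 h2 h12 hε2 hx]
      nlinarith [le_min ha0 hb0]
    rw [cgRatio, if_neg hD.ne', lt_div_iff₀ hD, concaveExt_eq h0 h1 h2 h12 hε2 hx,
      multilinearExt_eq h0 h1 h2 h12]
    exact two_mul_add_mul_min_lt hε0 hε2 ha0 hb0 hab

lemma cgRatio_const (hε2 : ε < 1 / 2) {t : ℝ} (ht0 : 0 < t) (ht1 : t ≤ 1) :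
    cgRatio f (fun _ => t) = 2 * ε + (1 - 2 * ε) * t := by
  have hD : concaveExt f (fun _ => t) = t := by
    rw [concaveExt_eq h0 h1 h2 h12 hε2 fun _ => ⟨ht0.le, ht1⟩, min_self]; ring
  rw [cgRatio, hD, if_neg ht0.ne', multilinearExt_eq h0 h1 h2 h12]
  field_simp
  ring

end NonSubmodularExample

/-- For `ε ∈ (0, 1/2)` and the monotone (non-submodular) function on the
two-element ground set with `f(∅) = 0`, `f({1}) = f({2}) = ε` and `f({1,2}) = 1`, the
infimum defining the correlation gap equals `2ε` and is not attained: the ratio is strictly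
greater than `2ε` at every point of `[0,1]^2`. -/
theorem corrGap_not_attained (ε : ℝ) (hε0 : 0 < ε) (hε2 : ε < 1 / 2)
    (f : Finset (Fin 2) → ℝ)
    (h0 : f ∅ = 0) (h1 : f {0} = ε) (h2 : f {1} = ε) (h12 : f {0, 1} = 1) :
    corrGap f = 2 * ε ∧
    ∀ x : Fin 2 → ℝ, (∀ i, 0 ≤ x i ∧ x i ≤ 1) → 2 * ε < cgRatio f x := by
  have hlt : ∀ x : Fin 2 → ℝ, (∀ i, 0 ≤ x i ∧ x i ≤ 1) → 2 * ε < cgRatio f x :=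
    fun x hx => NonSubmodularExample.two_mul_lt_cgRatio h0 h1 h2 h12 hε0 hε2 hx
  refine ⟨corrGap_eq_of_forall_lt_cgRatio hlt fun w hw => ?_, hlt⟩
  set t := min (w - 2 * ε) 1
  have ht0 : 0 < t := lt_min (by linarith) one_pos
  have ht1 : t ≤ 1 := min_le_right _ _
  refine ⟨fun _ => t, fun _ => ⟨ht0.le, ht1⟩, ?_⟩
  rw [NonSubmodularExample.cgRatio_const h0 h1 h2 h12 hε2 ht0 ht1]
  nlinarith [min_le_left (w - 2 * ε) 1]
end
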